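/- arXiv:2310.07105 — 5 statements merged into one kernel-verified Lean document; each statement's English description precedes it below -/
import Mathlib

section
/- Let p be a prime, G a finite p-group, Φ a finite group of order prime to p acting on G, and Γ = G ⋊ Φ. Let E be a finite-dimensional 𝔽_p[Γ]-module, and let r be a natural number such that the submodule of G-invariants E^G (which is an 𝔽_p[Φ]-module, since G is normal in Γ) can be generated by r elements as an 𝔽_p[Φ]-module. Then there exists an injective homomorphism of 𝔽_p[Γ]-modules from E into the free module 𝔽_p[Γ]^r. -/
open MonoidAlgebra

namespace Stmt5Aux

variable (p : ℕ) [Fact p.Prime]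
  {G : Type*} [Group G]
  {Φ : Type*} [Group Φ]
  (φ : Φ →* MulAut G)
  (E : Type*) [AddCommGroup E] [Module (MonoidAlgebra (ZMod p) (G ⋊[φ] Φ)) E]
  [Module (ZMod p) E] [IsScalarTower (ZMod p) (MonoidAlgebra (ZMod p) (G ⋊[φ] Φ)) E]

local notation "A" => MonoidAlgebra (ZMod p) (G ⋊[φ] Φ)

theorem smul_comm' (a : A) (c : ZMod p) (e : E) : a • (c • e) = c • (a • e) := by
  have h1 : c • e = ((c • (1 : A)) • e) := by rw [smul_assoc, one_smul]
  rw [h1, ← mul_smul, mul_smul_comm, mul_one, smul_assoc]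

/-- the action of a group element as a `ZMod p`-linear map -/
noncomputable def T (γ : G ⋊[φ] Φ) : E →ₗ[ZMod p] E where
  toFun e := MonoidAlgebra.of (ZMod p) (G ⋊[φ] Φ) γ • e
  map_add' _ _ := smul_add _ _ _
  map_smul' c e := smul_comm' p φ E _ c e

@[simp] theorem T_apply (γ : G ⋊[φ] Φ) (e : E) :
    T p φ E γ e = MonoidAlgebra.of (ZMod p) (G ⋊[φ] Φ) γ • e := rfl

theorem T_T (γ δ : G ⋊[φ] Φ) (e : E) : T p φ E γ (T p φ E δ e) = T p φ E (γ * δ) e := by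
  simp [T_apply, ← mul_smul, ← map_mul]

/-- the submodule of `G`-invariants -/
def FixG : Submodule (ZMod p) E where
  carrier := {e | ∀ g : G, T p φ E (SemidirectProduct.inl g) e = e}
  zero_mem' g := map_zero _
  add_mem' ha hb g := by rw [map_add, ha g, hb g]
  smul_mem' c e he g := by rw [map_smul, he g]

variable {E}

theorem mem_FixG {e : E} :
    e ∈ FixG p φ E ↔ ∀ g : G, T p φ E (SemidirectProduct.inl g) e = e := Iff.rfl

theorem inl_mul_inr (g : G) (f : Φ) :
    (SemidirectProduct.inl g : G ⋊[φ] Φ) * SemidirectProduct.inr f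
      = SemidirectProduct.inr f * SemidirectProduct.inl ((φ f)⁻¹ g) := by
  have := SemidirectProduct.inl_aut (φ := φ) f ((φ f)⁻¹ g)
  rw [MulAut.apply_inv_self] at this
  rw [this, mul_assoc, mul_assoc, ← map_mul, inv_mul_cancel, map_one, mul_one]

theorem T_inr_mem_FixG (f : Φ) {e : E} (he : e ∈ FixG p φ E) :
    T p φ E (SemidirectProduct.inr f) e ∈ FixG p φ E := by
  intro g
  rw [T_T, inl_mul_inr, ← T_T]
  rw [mem_FixG] at he
  rw [he]

variable (E)

/-- action on invariants by an element of `Φ` -/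
noncomputable def ρ (f : Φ) : FixG p φ E →ₗ[ZMod p] FixG p φ E :=
  (T p φ E (SemidirectProduct.inr f)).restrict fun _ he => T_inr_mem_FixG p φ f he

variable {E}

@[simp] theorem coe_ρ (f : Φ) (v : FixG p φ E) :
    (ρ p φ E f v : E) = T p φ E (SemidirectProduct.inr f) (v : E) := by simp [ρ, LinearMap.restrict_apply]

theorem ρ_ρ (f f' : Φ) (v : FixG p φ E) : ρ p φ E f (ρ p φ E f' v) = ρ p φ E (f * f') v := by
  ext; rw [coe_ρ, coe_ρ, coe_ρ, T_T, ← map_mul]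

@[simp] theorem ρ_one (v : FixG p φ E) : ρ p φ E (1 : Φ) v = v := by
  ext; simp [coe_ρ, T_apply, ← MonoidAlgebra.one_def]

theorem ρ_ρ_inv (f : Φ) (v : FixG p φ E) : ρ p φ E f⁻¹ (ρ p φ E f v) = v := by
  rw [ρ_ρ, inv_mul_cancel, ρ_one]

section
variable [Fintype Φ] {r : ℕ}

variable (E)

/-- the surjection from the free module onto the invariants -/
noncomputable def piMap (s : Fin r → E) (hs : ∀ i, s i ∈ FixG p φ E) :
    (Fin r → Φ → ZMod p) →ₗ[ZMod p] FixG p φ E where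
  toFun x := ∑ i, ∑ f, x i f • ρ p φ E f ⟨s i, hs i⟩
  map_add' x y := by simp [add_smul, Finset.sum_add_distrib]
  map_smul' c x := by simp [smul_smul, Finset.smul_sum]

theorem piMap_apply (s : Fin r → E) (hs : ∀ i, s i ∈ FixG p φ E) (x : Fin r → Φ → ZMod p) :
    piMap p φ E s hs x = ∑ i, ∑ f, x i f • ρ p φ E f ⟨s i, hs i⟩ := rfl

/-- the regular-representation action on the free module -/
noncomputable def rhoW (h : Φ) : (Fin r → Φ → ZMod p) →ₗ[ZMod p] (Fin r → Φ → ZMod p) where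
  toFun x i f := x i (h⁻¹ * f)
  map_add' x y := rfl
  map_smul' c x := rfl

theorem rhoW_apply (h : Φ) (x : Fin r → Φ → ZMod p) (i : Fin r) (f : Φ) :
    rhoW p (r := r) h x i f = x i (h⁻¹ * f) := rfl

theorem rhoW_rhoW (h h' : Φ) (x : Fin r → Φ → ZMod p) :
    rhoW p (r := r) h (rhoW p h' x) = rhoW p (h * h') x := by
  funext i f
  simp [rhoW_apply, mul_assoc, mul_inv_rev]

theorem piMap_rhoW (s : Fin r → E) (hs : ∀ i, s i ∈ FixG p φ E) (h : Φ)
    (x : Fin r → Φ → ZMod p) :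
    piMap p φ E s hs (rhoW p h x) = ρ p φ E h (piMap p φ E s hs x) := by
  rw [piMap_apply, piMap_apply, map_sum]
  refine Finset.sum_congr rfl fun i _ => ?_
  rw [map_sum]
  have := fun f => (ρ p φ E h).map_smul (x i f) (ρ p φ E f ⟨s i, hs i⟩)
  refine (Fintype.sum_bijective (fun f => h * f) (Group.mulLeft_bijective h) _ _
    fun f => ?_).symm
  rw [this f, ρ_ρ, rhoW_apply, inv_mul_cancel_left]

theorem piMap_surj (s : Fin r → E) (hs : ∀ i, s i ∈ FixG p φ E)
    (hspan : ∀ v : FixG p φ E, (v : E) ∈ Submodule.span (ZMod p)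
      {x : E | ∃ (i : Fin r) (f : Φ), x = T p φ E (SemidirectProduct.inr f) (s i)}) :
    Function.Surjective (piMap p φ E s hs) := by
  classical
  intro v
  have hR : Submodule.span (ZMod p)
      {x : E | ∃ (i : Fin r) (f : Φ), x = T p φ E (SemidirectProduct.inr f) (s i)}
      ≤ (LinearMap.range (piMap p φ E s hs)).map (FixG p φ E).subtype := by
    rw [Submodule.span_le]
    rintro x ⟨i, f, rfl⟩
    refine ⟨ρ p φ E f ⟨s i, hs i⟩, ⟨fun j f' => if j = i ∧ f' = f then 1 else 0, ?_⟩, rfl⟩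
    rw [piMap_apply]
    rw [Finset.sum_eq_single i ?_ (by simp)]
    · rw [Finset.sum_eq_single f ?_ (by simp)]
      · simp
      · intro b _ hb; simp [hb]
    · intro b _ hb; simp [hb]
  obtain ⟨u, ⟨w, hw⟩, hu⟩ := hR (hspan v)
  exact ⟨w, by rwa [hw, ← Subtype.coe_inj]⟩

theorem exists_section (hΦ : ¬ p ∣ Nat.card Φ)
    (s : Fin r → E) (hs : ∀ i, s i ∈ FixG p φ E)
    (hsurj : Function.Surjective (piMap p φ E s hs)) :
    ∃ σ : FixG p φ E →ₗ[ZMod p] (Fin r → Φ → ZMod p),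
      (∀ v, piMap p φ E s hs (σ v) = v) ∧
      (∀ h v, σ (ρ p φ E h v) = rhoW p h (σ v)) := by
  have hcard : (Nat.card Φ : ZMod p) ≠ 0 := fun h =>
    hΦ ((ZMod.natCast_eq_zero_iff _ p).1 h)
  obtain ⟨σ₀, hσ₀⟩ := (piMap p φ E s hs).exists_rightInverse_of_surjective
    (LinearMap.range_eq_top.2 hsurj)
  have hσ₀' : ∀ v, piMap p φ E s hs (σ₀ v) = v := fun v => by
    have := DFunLike.congr_fun hσ₀ v
    simpa using this
  set c : ZMod p := (Nat.card Φ : ZMod p)⁻¹ with hc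
  refine ⟨c • ∑ f : Φ, (rhoW p f⁻¹) ∘ₗ σ₀ ∘ₗ ρ p φ E f, fun v => ?_, fun h v => ?_⟩
  · rw [LinearMap.smul_apply, LinearMap.sum_apply, map_smul, map_sum]
    have : ∀ f : Φ, piMap p φ E s hs (((rhoW p f⁻¹) ∘ₗ σ₀ ∘ₗ ρ p φ E f) v) = v := fun f => by
      rw [LinearMap.comp_apply, LinearMap.comp_apply, piMap_rhoW, hσ₀', ρ_ρ_inv]
    rw [Finset.sum_congr rfl fun f _ => this f, Finset.sum_const, Finset.card_univ,
      ← Nat.cast_smul_eq_nsmul (ZMod p), smul_smul, hc, ← Nat.card_eq_fintype_card,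
      inv_mul_cancel₀ hcard, one_smul]
  · rw [LinearMap.smul_apply, LinearMap.sum_apply, LinearMap.smul_apply, LinearMap.sum_apply,
      map_smul, map_sum]
    congr 1
    refine (Fintype.sum_bijective (fun f => f * h⁻¹) (Group.mulRight_bijective h⁻¹) _ _
      fun f => ?_).symm
    rw [LinearMap.comp_apply, LinearMap.comp_apply, LinearMap.comp_apply, LinearMap.comp_apply,
      ρ_ρ, mul_inv_rev, inv_inv, inv_mul_cancel_right, ← rhoW_rhoW]

theorem exists_functionals (hΦ : ¬ p ∣ Nat.card Φ)
    (s : Fin r → E) (hs : ∀ i, s i ∈ FixG p φ E)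
    (hsurj : Function.Surjective (piMap p φ E s hs)) :
    ∃ lam : Fin r → (E →ₗ[ZMod p] ZMod p),
      ∀ v : E, v ∈ FixG p φ E → v ≠ 0 →
        ∃ (i : Fin r) (f : Φ), lam i (T p φ E (SemidirectProduct.inr f) v) ≠ 0 := by
  obtain ⟨σ, hπσ, hσρ⟩ := exists_section p φ E hΦ s hs hsurj
  obtain ⟨q, hq⟩ := Submodule.exists_isCompl (FixG p φ E)
  set P := (FixG p φ E).projectionOnto q hq with hP
  refine ⟨fun i => LinearMap.proj (1 : Φ) ∘ₗ LinearMap.proj i ∘ₗ σ ∘ₗ P, ?_⟩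
  intro v hv hvne
  have hσv : σ ⟨v, hv⟩ ≠ 0 := by
    intro h
    apply hvne
    have := hπσ ⟨v, hv⟩
    rw [h, map_zero] at this
    exact (congrArg Subtype.val this).symm
  obtain ⟨i, hi⟩ := Function.ne_iff.1 hσv
  obtain ⟨f₀, hf₀⟩ := Function.ne_iff.1 hi
  refine ⟨i, f₀⁻¹, ?_⟩
  have h1 : P (T p φ E (SemidirectProduct.inr f₀⁻¹) v) = ρ p φ E f₀⁻¹ ⟨v, hv⟩ := by
    have : T p φ E (SemidirectProduct.inr f₀⁻¹) v = ((ρ p φ E f₀⁻¹ ⟨v, hv⟩ : FixG p φ E) : E) :=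
      (coe_ρ p φ f₀⁻¹ ⟨v, hv⟩).symm
    rw [this, hP, Submodule.projectionOnto_apply_left]
  have h2 : σ (ρ p φ E f₀⁻¹ ⟨v, hv⟩) = rhoW p f₀⁻¹ (σ ⟨v, hv⟩) := hσρ f₀⁻¹ ⟨v, hv⟩
  simp only [LinearMap.comp_apply, h1, h2, LinearMap.proj_apply]
  rw [rhoW_apply, inv_inv, mul_one]
  exact hf₀

end

section Psi

variable [Fintype (G ⋊[φ] Φ)] (E) {r : ℕ}

/-- the embedding into the free module, as a bare function -/
noncomputable def psiFun (lam : Fin r → (E →ₗ[ZMod p] ZMod p)) (e : E) :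
    Fin r → MonoidAlgebra (ZMod p) (G ⋊[φ] Φ) := fun i =>
  ∑ γ : G ⋊[φ] Φ, lam i (T p φ E γ e) • MonoidAlgebra.single γ⁻¹ (1 : ZMod p)

theorem psiFun_coeff (lam : Fin r → (E →ₗ[ZMod p] ZMod p)) (e : E) (i : Fin r)
    (δ : G ⋊[φ] Φ) : (psiFun p φ E lam e i).coeff δ = lam i (T p φ E δ⁻¹ e) := by
  classical
  rw [psiFun, MonoidAlgebra.coeff_sum, Finsupp.finset_sum_apply]
  have : ∀ γ : G ⋊[φ] Φ,
      (lam i (T p φ E γ e) • MonoidAlgebra.single γ⁻¹ (1 : ZMod p)).coeff δ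
        = if γ = δ⁻¹ then lam i (T p φ E γ e) else 0 := by
    intro γ
    rw [MonoidAlgebra.coeff_smul_apply, MonoidAlgebra.coeff_single, Finsupp.single_apply]
    by_cases h : γ = δ⁻¹
    · subst h; rw [if_pos (inv_inv δ), if_pos rfl, smul_eq_mul, mul_one]
    · rw [if_neg h, if_neg (fun hh => h (by rw [← hh, inv_inv])), smul_zero]
  rw [Finset.sum_congr rfl fun γ _ => this γ, Finset.sum_ite_eq' Finset.univ δ⁻¹
    (fun γ => lam i (T p φ E γ e)), if_pos (Finset.mem_univ _)]

theorem psiFun_add (lam : Fin r → (E →ₗ[ZMod p] ZMod p)) (e e' : E) :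
    psiFun p φ E lam (e + e') = psiFun p φ E lam e + psiFun p φ E lam e' := by
  funext i
  simp [psiFun, map_add, add_smul, Finset.sum_add_distrib]

theorem psiFun_csmul (lam : Fin r → (E →ₗ[ZMod p] ZMod p)) (c : ZMod p) (e : E) :
    psiFun p φ E lam (c • e) = c • psiFun p φ E lam e := by
  funext i
  simp [psiFun, map_smul, smul_smul, Finset.smul_sum]

theorem psiFun_of (lam : Fin r → (E →ₗ[ZMod p] ZMod p)) (δ : G ⋊[φ] Φ) (e : E) :
    psiFun p φ E lam (MonoidAlgebra.of (ZMod p) (G ⋊[φ] Φ) δ • e)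
      = MonoidAlgebra.of (ZMod p) (G ⋊[φ] Φ) δ • psiFun p φ E lam e := by
  funext i
  rw [Pi.smul_apply, smul_eq_mul, psiFun, psiFun, Finset.mul_sum]
  refine Fintype.sum_bijective (fun γ => γ * δ) (Group.mulRight_bijective δ) _ _
    fun γ => ?_
  beta_reduce
  rw [mul_smul_comm]
  have hT : T p φ E γ (MonoidAlgebra.of (ZMod p) (G ⋊[φ] Φ) δ • e) = T p φ E (γ * δ) e := by
    rw [← T_apply p φ E δ e, T_T]
  rw [hT]
  have hst : ∀ x : G ⋊[φ] Φ, MonoidAlgebra.of (ZMod p) (G ⋊[φ] Φ) δ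
      * MonoidAlgebra.single x (1 : ZMod p) = MonoidAlgebra.single (δ * x) (1 : ZMod p) := by
    intro x
    rw [MonoidAlgebra.of_apply, MonoidAlgebra.single_mul_single, one_mul]
  rw [hst, mul_inv_rev, mul_inv_cancel_left]

/-- the embedding into the free module -/
noncomputable def psi (lam : Fin r → (E →ₗ[ZMod p] ZMod p)) :
    E →ₗ[MonoidAlgebra (ZMod p) (G ⋊[φ] Φ)]
      (Fin r → MonoidAlgebra (ZMod p) (G ⋊[φ] Φ)) where
  toFun := psiFun p φ E lam
  map_add' := psiFun_add p φ E lam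
  map_smul' a e := by
    simp only [RingHom.id_apply]
    induction a using MonoidAlgebra.induction_on with
    | of δ => rw [psiFun_of]
    | add f g hf hg => rw [add_smul, psiFun_add, hf, hg, add_smul]
    | smul c a ha => rw [smul_assoc, psiFun_csmul, ha, smul_assoc]

end Psi

end Stmt5Aux

/-- let `Γ = G ⋊ Φ` with `G` a finite `p`-group and `Φ` a finite group of order
prime to `p`, and let `E` be a finite-dimensional `𝔽_p[Γ]`-module.  If the `𝔽_p[Φ]`-module
`E^G` of `G`-invariants is generated by `r` elements (i.e. `E^G` is contained in the
`𝔽_p`-span of the `Φ`-translates of `r` of its elements), then `E` embeds into the free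
module `𝔽_p[Γ]^r`. -/
theorem stmt5 (p : ℕ) [Fact p.Prime]
    (G : Type*) [Group G] [Finite G] (hG : IsPGroup p G)
    (Φ : Type*) [Group Φ] [Finite Φ] (hΦ : ¬ p ∣ Nat.card Φ)
    (φ : Φ →* MulAut G)
    (E : Type*) [AddCommGroup E] [Module (MonoidAlgebra (ZMod p) (G ⋊[φ] Φ)) E]
    [Module (ZMod p) E] [IsScalarTower (ZMod p) (MonoidAlgebra (ZMod p) (G ⋊[φ] Φ)) E]
    [FiniteDimensional (ZMod p) E]
    (r : ℕ)
    (hgen : ∃ s : Fin r → E,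
      (∀ i, ∀ g : G,
        (MonoidAlgebra.of (ZMod p) (G ⋊[φ] Φ) (SemidirectProduct.inl g)) • s i = s i) ∧
      ∀ e : E,
        (∀ g : G, (MonoidAlgebra.of (ZMod p) (G ⋊[φ] Φ) (SemidirectProduct.inl g)) • e = e) →
        e ∈ Submodule.span (ZMod p)
          {x : E | ∃ (i : Fin r) (f : Φ),
            x = (MonoidAlgebra.of (ZMod p) (G ⋊[φ] Φ) (SemidirectProduct.inr f)) • s i}) :
    ∃ ψ : E →ₗ[MonoidAlgebra (ZMod p) (G ⋊[φ] Φ)]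
        (Fin r → MonoidAlgebra (ZMod p) (G ⋊[φ] Φ)),
      Function.Injective ψ := by
  classical
  obtain ⟨s, hsfix, hspan⟩ := hgen
  letI : Fintype Φ := Fintype.ofFinite Φ
  haveI : Finite (G ⋊[φ] Φ) :=
    Finite.of_injective (fun x => (x.left, x.right) : G ⋊[φ] Φ → G × Φ)
      (fun a b h => SemidirectProduct.ext (congrArg Prod.fst h) (congrArg Prod.snd h))
  letI : Fintype (G ⋊[φ] Φ) := Fintype.ofFinite _
  haveI : Finite E := Module.finite_of_finite (ZMod p)
  have hs : ∀ i, s i ∈ Stmt5Aux.FixG p φ E := fun i g => hsfix i g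
  have hsurj : Function.Surjective (Stmt5Aux.piMap p φ E s hs) := by
    apply Stmt5Aux.piMap_surj
    intro v
    exact hspan v.1 v.2
  obtain ⟨lam, hlam⟩ := Stmt5Aux.exists_functionals p φ E hΦ s hs hsurj
  refine ⟨Stmt5Aux.psi p φ E lam, ?_⟩
  rw [← LinearMap.ker_eq_bot]
  by_contra hker
  obtain ⟨e₀, he₀mem, he₀⟩ := Submodule.exists_mem_ne_zero_of_ne_bot hker
  set K := (LinearMap.ker (Stmt5Aux.psi p φ E lam)).restrictScalars (ZMod p) with hKdef
  have he₀K : e₀ ∈ K := he₀mem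
  letI : SMul G K := ⟨fun g x =>
    ⟨MonoidAlgebra.of (ZMod p) (G ⋊[φ] Φ) (SemidirectProduct.inl g) • (x : E), by
      have hx : (x : E) ∈ LinearMap.ker (Stmt5Aux.psi p φ E lam) := x.2
      have : Stmt5Aux.psi p φ E lam
          (MonoidAlgebra.of (ZMod p) (G ⋊[φ] Φ) (SemidirectProduct.inl g) • (x : E)) = 0 := by
        rw [map_smul, LinearMap.mem_ker.1 hx, smul_zero]
      exact this⟩⟩
  have smul_def : ∀ (g : G) (x : K),
      ((g • x : K) : E) = MonoidAlgebra.of (ZMod p) (G ⋊[φ] Φ) (SemidirectProduct.inl g) • (x : E) :=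
    fun g x => rfl
  letI : MulAction G K :=
    { one_smul := fun x => Subtype.ext (by
        rw [smul_def, map_one, map_one, one_smul])
      mul_smul := fun g g' x => Subtype.ext (by
        rw [smul_def, smul_def, smul_def, map_mul, map_mul, mul_smul]) }
  have hnontriv : Nontrivial K := nontrivial_of_ne ⟨e₀, he₀K⟩ 0 (by
    intro h
    exact he₀ (congrArg Subtype.val h))
  letI : Fintype K := Fintype.ofFinite K
  have hcardK : p ∣ Nat.card K := by
    have h1 : Fintype.card K = Fintype.card (ZMod p) ^ Module.finrank (ZMod p) K :=
      Module.card_eq_pow_finrank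
    have h2 : 0 < Module.finrank (ZMod p) K := Module.finrank_pos_iff.2 hnontriv
    rw [Nat.card_eq_fintype_card, h1, ZMod.card]
    exact dvd_pow_self p h2.ne'
  have hfix := hG.card_modEq_card_fixedPoints (α := K)
  have hdvd : p ∣ Nat.card (MulAction.fixedPoints G K) :=
    Nat.modEq_zero_iff_dvd.1 (hfix.symm.trans (Nat.modEq_zero_iff_dvd.2 hcardK))
  have h0fix : (0 : K) ∈ MulAction.fixedPoints G K := fun g => Subtype.ext (by
    rw [smul_def]
    simp)
  letI : Fintype (MulAction.fixedPoints G K) := Fintype.ofFinite _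
  have hone : 1 < Fintype.card (MulAction.fixedPoints G K) := by
    have hpos : 0 < Fintype.card (MulAction.fixedPoints G K) :=
      Fintype.card_pos_iff.2 ⟨⟨0, h0fix⟩⟩
    have hle : p ≤ Fintype.card (MulAction.fixedPoints G K) :=
      Nat.le_of_dvd hpos (by rwa [Nat.card_eq_fintype_card] at hdvd)
    exact lt_of_lt_of_le (Fact.out : p.Prime).one_lt hle
  obtain ⟨x, hxne⟩ := Fintype.exists_ne_of_one_lt_card hone ⟨0, h0fix⟩
  set v : E := ((x : K) : E) with hvdef
  have hvFix : v ∈ Stmt5Aux.FixG p φ E := by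
    intro g
    have := x.2 g
    exact congrArg Subtype.val this
  have hvne : v ≠ 0 := by
    intro h
    exact hxne (Subtype.ext (Subtype.ext h))
  have hvker : Stmt5Aux.psi p φ E lam v = 0 := (x : K).2
  obtain ⟨i, f, hlamne⟩ := hlam v hvFix hvne
  apply hlamne
  have hc := Stmt5Aux.psiFun_coeff p φ E lam v i (SemidirectProduct.inr f)⁻¹
  rw [inv_inv] at hc
  rw [← hc]
  have hz : Stmt5Aux.psiFun p φ E lam v = 0 := hvker
  rw [hz]
  rfl
end

section
/- Let p be a prime and let Φ̃ be a subgroup of GL₂(𝔽_p) whose order is prime to p. Then there exists an injective group homomorphism ι : Φ̃ → GL₂(ℤ_p) such that the composition of ι with the reduction map GL₂(ℤ_p) → GL₂(𝔽_p) (induced by ℤ_p → ℤ_p/pℤ_p = 𝔽_p) equals the inclusion Φ̃ ⊆ GL₂(𝔽_p). -/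
/-!
The kernel of `GL₂(ℤ/p^(k+2)) → GL₂(ℤ/p^(k+1))` consists of matrices `1 + A` with `A ≡ 0`
mod `p^(k+1)`; as `A * A = 0` and `p • A = 0`, every such element has order dividing `p`.
Since `|Φ̃|` is prime to `p`, Schur–Zassenhaus lifts `Φ̃` one level at a time through the tower
`GL₂(ℤ/p) ← GL₂(ℤ/p²) ← ⋯`, and the compatible lifts assemble to a homomorphism into
`GL₂(ℤ_p) = lim GL₂(ℤ/p^k)` reducing to the inclusion modulo `p`.
-/

open scoped MatrixGroups

def glMap {R S : Type*} [CommRing R] [CommRing S] (f : R →+* S) :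
    GL (Fin 2) R →* GL (Fin 2) S :=
  Units.map (f.mapMatrix).toMonoidHom

theorem glMap_glMap {R S T : Type*} [CommRing R] [CommRing S] [CommRing T] (g : S →+* T)
    (f : R →+* S) (x : GL (Fin 2) R) : glMap g (glMap f x) = glMap (g.comp f) x :=
  Units.ext Matrix.map_map.symm

theorem glMap_id {R : Type*} [CommRing R] (x : GL (Fin 2) R) : glMap (RingHom.id R) x = x :=
  Units.ext (Matrix.map_id _)

section Splitting

variable {G Q : Type*} [Group G] [Group Q] [Finite G] {p : ℕ} [Fact p.Prime]

theorem MonoidHom.exists_rightInverse_of_isPGroup_ker (f : G →* Q)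
    (hf : Function.Surjective f) (hker : IsPGroup p f.ker) (hQ : ¬ p ∣ Nat.card Q) :
    ∃ s : Q →* G, f.comp s = MonoidHom.id Q := by
  obtain ⟨k, hk⟩ := hker.exists_card_eq
  have hcop : (Nat.card f.ker).Coprime f.ker.index := by
    rw [hk, Subgroup.index_ker, MonoidHom.range_eq_top.mpr hf, Subgroup.card_top]
    exact ((Nat.Prime.coprime_iff_not_dvd Fact.out).mpr hQ).pow_left k
  obtain ⟨H, hH⟩ := Subgroup.exists_right_complement'_of_coprime hcop
  let e := QuotientGroup.quotientKerEquivOfSurjective f hf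
  refine ⟨H.subtype.comp (e.symm.trans hH.symm.QuotientMulEquiv).toMonoidHom,
    MonoidHom.ext fun q => ?_⟩
  have hmk := Subgroup.IsComplement.quotientGroupMk_leftQuotientEquiv hH.symm (e.symm q)
  simp only [MonoidHom.comp_apply, MulEquiv.coe_toMonoidHom, MulEquiv.trans_apply]
  exact (congrArg e hmk).trans (by simp)

theorem MonoidHom.exists_lift_of_isPGroup_ker {Φ : Type*} [Group Φ] (f : G →* Q)
    (hf : Function.Surjective f) (hker : IsPGroup p f.ker) (hΦ : ¬ p ∣ Nat.card Φ)
    (ι : Φ →* Q) : ∃ ι' : Φ →* G, f.comp ι' = ι := by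
  set K := ι.range
  have hK : ¬ p ∣ Nat.card K := fun h => hΦ (h.trans (Subgroup.card_range_dvd ι))
  have hker' : IsPGroup p (f.subgroupComap K).ker := fun g => by
    obtain ⟨k, hk⟩ := hker ⟨g, congrArg Subtype.val g.2⟩
    exact ⟨k, Subtype.ext (Subtype.ext (by simpa using congrArg Subtype.val hk))⟩
  obtain ⟨s, hs⟩ := (f.subgroupComap K).exists_rightInverse_of_isPGroup_ker
    (f.subgroupComap_surjective_of_surjective K hf) hker' hK
  exact ⟨(K.comap f).subtype.comp (s.comp ι.rangeRestrict),
    MonoidHom.ext fun g => congrArg Subtype.val (DFunLike.congr_fun hs (ι.rangeRestrict g))⟩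

end Splitting

theorem one_add_pow_of_mul_self_eq_zero {R : Type*} [Semiring R] {a : R} (ha : a * a = 0)
    (m : ℕ) : (1 + a) ^ m = 1 + m • a := by
  induction m with
  | zero => simp
  | succ m ih => rw [pow_succ, ih, add_mul, one_mul, mul_add, mul_one, smul_mul_assoc, ha,
      smul_zero, add_zero, succ_nsmul', add_assoc]

section SquareZeroKernel

variable {R S : Type*} [CommRing R] [CommRing S] (f : R →+* S)

theorem RingHom.isLocalHom_of_mul_eq_zero_of_mem_ker (hf : Function.Surjective f)
    (hker : ∀ a ∈ RingHom.ker f, ∀ b ∈ RingHom.ker f, a * b = 0) : IsLocalHom f where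
  map_nonunit a ha := by
    obtain ⟨b, hb⟩ := hf ↑ha.unit⁻¹
    have hab : a * b - 1 ∈ RingHom.ker f := by simp [hb]
    have hnil : IsNilpotent (a * b - 1) := ⟨2, by rw [sq]; exact hker _ hab _ hab⟩
    exact isUnit_of_mul_isUnit_left (by simpa using hnil.isUnit_one_add)

theorem RingHom.mapMatrix_surjective {n : Type*} [Fintype n] [DecidableEq n]
    (hf : Function.Surjective f) : Function.Surjective (f.mapMatrix (m := n)) :=
  fun B => ⟨B.map (Function.surjInv hf), by simp [Matrix.map_map]⟩

instance RingHom.isLocalHom_mapMatrix {n : Type*} [Fintype n] [DecidableEq n] [IsLocalHom f] :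
    IsLocalHom (f.mapMatrix (m := n)) where
  map_nonunit M hM := by
    rw [Matrix.isUnit_iff_isUnit_det] at hM ⊢
    rw [← RingHom.map_det] at hM
    exact IsLocalHom.map_nonunit _ hM

theorem glMap_surjective [IsLocalHom f] (hf : Function.Surjective f) :
    Function.Surjective (glMap f) :=
  IsLocalRing.surjective_units_map_of_local_ringHom _ (f.mapMatrix_surjective hf) inferInstance

theorem pow_eq_one_of_glMap_eq_one (hker : ∀ a ∈ RingHom.ker f, ∀ b ∈ RingHom.ker f, a * b = 0)
    {m : ℕ} (hm : ∀ a ∈ RingHom.ker f, (m : R) * a = 0) {x : GL (Fin 2) R}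
    (hx : glMap f x = 1) : x ^ m = 1 := by
  set A := (x : Matrix (Fin 2) (Fin 2) R) - 1
  have hA0 : f.mapMatrix A = 0 := by
    rw [map_sub, map_one, sub_eq_zero]
    exact congrArg Units.val hx
  have hA (i j) : A i j ∈ RingHom.ker f := congrFun (congrFun hA0 i) j
  have hAA : A * A = 0 := by
    ext i j
    simp [Matrix.mul_apply, hker _ (hA _ _) _ (hA _ _)]
  have hmA : m • A = 0 := by
    ext i j
    simp [nsmul_eq_mul, hm _ (hA i j)]
  ext : 1
  rw [Units.val_pow_eq_pow_val, ← add_sub_cancel (1 : Matrix (Fin 2) (Fin 2) R) x.val,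
    one_add_pow_of_mul_self_eq_zero hAA, hmA, add_zero, Units.val_one]

end SquareZeroKernel

namespace ZMod

variable {m n : ℕ} [NeZero n] (h : m ∣ n)

theorem exists_eq_mul_of_mem_ker_castHom {a : ZMod n}
    (ha : a ∈ RingHom.ker (castHom h (ZMod m))) : ∃ c : ZMod n, a = m * c := by
  rw [RingHom.mem_ker, castHom_apply, cast_eq_val, natCast_eq_zero_iff] at ha
  obtain ⟨c, hc⟩ := ha
  exact ⟨c, by rw [← natCast_zmod_val a, hc, Nat.cast_mul]⟩

theorem mul_eq_zero_of_mem_ker_castHom (hn : n ∣ m * m) {a b : ZMod n}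
    (ha : a ∈ RingHom.ker (castHom h (ZMod m))) (hb : b ∈ RingHom.ker (castHom h (ZMod m))) :
    a * b = 0 := by
  obtain ⟨c, rfl⟩ := exists_eq_mul_of_mem_ker_castHom h ha
  obtain ⟨d, rfl⟩ := exists_eq_mul_of_mem_ker_castHom h hb
  rw [mul_mul_mul_comm, ← Nat.cast_mul, (natCast_eq_zero_iff _ _).mpr hn, zero_mul]

theorem natCast_mul_eq_zero_of_mem_ker_castHom {q : ℕ} (hq : n ∣ q * m) {a : ZMod n}
    (ha : a ∈ RingHom.ker (castHom h (ZMod m))) : (q : ZMod n) * a = 0 := by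
  obtain ⟨c, rfl⟩ := exists_eq_mul_of_mem_ker_castHom h ha
  rw [← mul_assoc, ← Nat.cast_mul, (natCast_eq_zero_iff _ _).mpr hq, zero_mul]

end ZMod

section Tower

variable (p : ℕ)

def glReduce (k : ℕ) : GL (Fin 2) (ZMod (p ^ (k + 2))) →* GL (Fin 2) (ZMod (p ^ (k + 1))) :=
  glMap (ZMod.castHom (pow_dvd_pow p (k + 1).le_succ) _)

variable [NeZero p]

theorem ZMod.mul_eq_zero_of_mem_ker_castHom_pow_succ (k : ℕ) :
    ∀ a ∈ RingHom.ker (ZMod.castHom (pow_dvd_pow p (k + 1).le_succ) (ZMod (p ^ (k + 1)))),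
    ∀ b ∈ RingHom.ker (ZMod.castHom (pow_dvd_pow p (k + 1).le_succ) (ZMod (p ^ (k + 1)))),
    a * b = 0 := fun _ ha _ hb =>
  ZMod.mul_eq_zero_of_mem_ker_castHom _ (by rw [← pow_add]; exact pow_dvd_pow p (by omega)) ha hb

theorem glReduce_surjective (k : ℕ) : Function.Surjective (glReduce p k) :=
  have := RingHom.isLocalHom_of_mul_eq_zero_of_mem_ker _ (ZMod.castHom_surjective _)
    (ZMod.mul_eq_zero_of_mem_ker_castHom_pow_succ p k)
  glMap_surjective _ (ZMod.castHom_surjective _)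

theorem isPGroup_ker_glReduce (k : ℕ) : IsPGroup p (glReduce p k).ker := fun x =>
  ⟨1, Subtype.ext <| by
    simpa using pow_eq_one_of_glMap_eq_one _ (ZMod.mul_eq_zero_of_mem_ker_castHom_pow_succ p k)
      (fun _ ha => ZMod.natCast_mul_eq_zero_of_mem_ker_castHom _ (pow_succ' p (k + 1)).dvd ha)
      x.2⟩

theorem exists_glReduce_tower [Fact p.Prime] {M : Type*} [Group M] (hM : ¬ p ∣ Nat.card M)
    (ι : M →* GL (Fin 2) (ZMod (p ^ 1))) :
    ∃ φ : ∀ k, M →* GL (Fin 2) (ZMod (p ^ (k + 1))),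
      φ 0 = ι ∧ ∀ k, (glReduce p k).comp (φ (k + 1)) = φ k := by
  choose lift hlift using fun k (ψ : M →* GL (Fin 2) (ZMod (p ^ (k + 1)))) =>
    (glReduce p k).exists_lift_of_isPGroup_ker (glReduce_surjective p k)
      (isPGroup_ker_glReduce p k) hM ψ
  exact ⟨fun k => Nat.rec (motive := fun k => M →* GL (Fin 2) (ZMod (p ^ (k + 1)))) ι lift k,
    rfl, fun k => hlift k _⟩

end Tower

namespace PadicInt

variable (p : ℕ) [Fact p.Prime]

theorem exists_toZModPow_succ_eq (x : ∀ k, ZMod (p ^ (k + 1)))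
    (hx : ∀ k, ZMod.castHom (pow_dvd_pow p (k + 1).le_succ) _ (x (k + 1)) = x k) :
    ∃ z : ℤ_[p], ∀ k, toZModPow (k + 1) z = x k := by
  -- `ZMod (p ^ 0)` is the zero ring, so the value at `0` is irrelevant.
  let f : ℕ → ℤ
    | 0 => 0
    | k + 1 => (x k).val
  have hf (i : ℕ) : (p : ℤ) ^ i ∣ f (i + 1) - f i := by
    rcases i with _ | k
    · simp
    · have := hx k
      rw [ZMod.castHom_apply, ZMod.cast_eq_val, ← ZMod.natCast_zmod_val (x k),
        ← Int.cast_natCast, ← Int.cast_natCast (R := ZMod _) (x k).val,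
        ZMod.intCast_eq_intCast_iff_dvd_sub] at this
      simpa [f] using dvd_sub_comm.mp this
  exact ⟨_, fun k => (toZModPow_ofIntSeq_of_pow_dvd_sub f p hf (k + 1)).trans (by simp [f])⟩

theorem matrix_ext_of_map_toZModPow {m n : Type*} {M N : Matrix m n ℤ_[p]}
    (h : ∀ k, M.map (toZModPow (k + 1)) = N.map (toZModPow (k + 1))) : M = N := by
  ext i j
  refine ext_of_toZModPow.mp fun k => ?_
  have hij := congrFun (congrFun (h k) i) j
  rw [Matrix.map_apply, Matrix.map_apply] at hij
  rw [← cast_toZModPow k (k + 1) k.le_succ, hij, cast_toZModPow _ _ k.le_succ]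

theorem exists_matrix_map_toZModPow_eq {m n : Type*} (X : ∀ k, Matrix m n (ZMod (p ^ (k + 1))))
    (hX : ∀ k, (X (k + 1)).map (ZMod.castHom (pow_dvd_pow p (k + 1).le_succ) _) = X k) :
    ∃ M : Matrix m n ℤ_[p], ∀ k, M.map (toZModPow (k + 1)) = X k := by
  choose M hM using fun i j => exists_toZModPow_succ_eq p (fun k => X k i j)
    (fun k => congrFun (congrFun (hX k) i) j)
  exact ⟨M, fun k => by ext i j; exact hM i j k⟩

theorem glMap_toZModPow_injective {x y : GL (Fin 2) ℤ_[p]}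
    (h : ∀ k, glMap (toZModPow (k + 1)) x = glMap (toZModPow (k + 1)) y) : x = y :=
  Units.ext (matrix_ext_of_map_toZModPow p fun k => congrArg Units.val (h k))

theorem exists_glMap_toZModPow_eq (x : ∀ k, GL (Fin 2) (ZMod (p ^ (k + 1))))
    (hx : ∀ k, glReduce p k (x (k + 1)) = x k) :
    ∃ y : GL (Fin 2) ℤ_[p], ∀ k, glMap (toZModPow (k + 1)) y = x k := by
  obtain ⟨M, hM⟩ := exists_matrix_map_toZModPow_eq p (fun k => (x k).val)
    (fun k => congrArg Units.val (hx k))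
  obtain ⟨N, hN⟩ := exists_matrix_map_toZModPow_eq p (fun k => (x k)⁻¹.val)
    (fun k => congrArg Units.val (((glReduce p k).map_inv _).trans (congrArg _ (hx k))))
  have hMN : M * N = 1 := matrix_ext_of_map_toZModPow p fun k => by
    rw [Matrix.map_mul, hM, hN, Units.mul_inv, Matrix.map_one _ (map_zero _) (map_one _)]
  have hNM : N * M = 1 := matrix_ext_of_map_toZModPow p fun k => by
    rw [Matrix.map_mul, hM, hN, Units.inv_mul, Matrix.map_one _ (map_zero _) (map_one _)]
  exact ⟨⟨M, N, hMN, hNM⟩, fun k => Units.ext (hM k)⟩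

theorem exists_monoidHom_glMap_toZModPow_comp {M : Type*} [Monoid M]
    (φ : ∀ k, M →* GL (Fin 2) (ZMod (p ^ (k + 1))))
    (hφ : ∀ k, (glReduce p k).comp (φ (k + 1)) = φ k) :
    ∃ ψ : M →* GL (Fin 2) ℤ_[p], ∀ k, (glMap (toZModPow (k + 1))).comp ψ = φ k := by
  choose ψ hψ using fun g => exists_glMap_toZModPow_eq p (fun k => φ k g)
    (fun k => DFunLike.congr_fun (hφ k) g)
  refine ⟨{ toFun := ψ
            map_one' := glMap_toZModPow_injective p fun k => by simp [hψ]
            map_mul' := fun g h => glMap_toZModPow_injective p fun k => by simp [hψ] },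
    fun k => MonoidHom.ext fun g => hψ g k⟩

theorem ringHom_eq_toZMod (f : ℤ_[p] →+* ZMod p) : f = toZMod :=
  ZMod.ringHom_eq_of_ker_eq _ _ <| by
    rw [ker_toZMod]
    exact IsLocalRing.eq_maximalIdeal
      (RingHom.ker_isMaximal_of_surjective _ (ZMod.ringHom_surjective f))

end PadicInt

/-- a subgroup `Φ̃` of `GL₂(𝔽_p)` of order prime to `p` lifts to `GL₂(ℤ_p)`:
there is an injective homomorphism `ι : Φ̃ → GL₂(ℤ_p)` whose composition with reduction
modulo `p` is the inclusion `Φ̃ ⊆ GL₂(𝔽_p)`. -/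
theorem stmt12 (p : ℕ) [Fact p.Prime]
    (Φt : Subgroup (GL (Fin 2) (ZMod p))) (hΦ : ¬ p ∣ Nat.card Φt) :
    ∃ ι : Φt →* GL (Fin 2) ℤ_[p],
      Function.Injective ι ∧
      ∀ h : Φt, glMap (PadicInt.toZMod) (ι h) = (h : GL (Fin 2) (ZMod p)) := by
  -- `ZMod (p ^ 1)` is not definitionally `ZMod p`, hence the casts between them.
  obtain ⟨φ, hφ₀, hφ⟩ := exists_glReduce_tower p hΦ
    ((glMap (ZMod.castHom (pow_one p).dvd _)).comp Φt.subtype)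
  obtain ⟨ι, hι⟩ := PadicInt.exists_monoidHom_glMap_toZModPow_comp p φ hφ
  have hred (h : Φt) : glMap PadicInt.toZMod (ι h) = h := by
    have := congrArg (glMap (ZMod.castHom (pow_one p).symm.dvd (ZMod p)))
      (DFunLike.congr_fun (hι 0) h)
    rwa [hφ₀, MonoidHom.comp_apply, MonoidHom.comp_apply, glMap_glMap, glMap_glMap,
      PadicInt.ringHom_eq_toZMod p (RingHom.comp _ _),
      RingHom.ext_zmod (RingHom.comp _ _) (RingHom.id _), glMap_id, Subgroup.coe_subtype] at this
  exact ⟨ι, fun a b hab => Subtype.ext (by rw [← hred a, hab, hred b]), hred⟩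
end

section
/- Fix a prime p. Let S be a commutative local ring equipped with a surjective ring homomorphism onto the p-adic integers ℤ_p whose kernel I is finite as a set. Then every 2×2 matrix of the form 1 + A with all entries of A in I is invertible over S, and the set Γ_I = 1 + M₂(I) is a subgroup of GL₂(S) which is a finite group of p-power order. -/
open scoped MatrixGroups

/-- The set `Γ_I = 1 + M₂(I)` of invertible `2 × 2` matrices over `S` congruent to `1`
modulo the ideal `I`. -/
def gammaSet (S : Type*) [CommRing S] (I : Ideal S) : Set (GL (Fin 2) S) :=
  {u | ∀ i j, ((u : Matrix (Fin 2) (Fin 2) S) - 1) i j ∈ I}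

/-- if `S` is a commutative local ring with a surjection onto `ℤ_p` with finite
kernel `I`, then every matrix `1 + A` with entries of `A` in `I` is invertible, and
`Γ_I = 1 + M₂(I)` is a subgroup of `GL₂(S)` of `p`-power order. -/
theorem stmt13 (p : ℕ) [Fact p.Prime] (S : Type*) [CommRing S] [IsLocalRing S]
    (f : S →+* ℤ_[p]) (hf : Function.Surjective f) (hfin : Finite (RingHom.ker f)) :
    (∀ M : Matrix (Fin 2) (Fin 2) S, (∀ i j, M i j ∈ RingHom.ker f) → IsUnit (1 + M)) ∧
    ∃ Γ : Subgroup (GL (Fin 2) S),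
      (Γ : Set (GL (Fin 2) S)) = gammaSet S (RingHom.ker f) ∧
      ∃ k : ℕ, Nat.card Γ = p ^ k := by
  set I := RingHom.ker f with hIdef
  -- `I` is a proper ideal
  have hInetop : I ≠ ⊤ := by
    intro h
    have h1 : (1 : S) ∈ I := h ▸ Submodule.mem_top
    rw [hIdef, RingHom.mem_ker, map_one] at h1
    exact one_ne_zero h1
  -- for `x ∈ I`, `1 + x` is a unit
  have hunit_one_add : ∀ x ∈ I, IsUnit (1 + x : S) := by
    intro x hx
    have hnu : -x ∈ nonunits S := by
      rw [mem_nonunits_iff]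
      intro hu
      exact hInetop (I.eq_top_of_isUnit_mem (I.neg_mem hx) hu)
    have := IsLocalRing.isUnit_one_sub_self_of_mem_nonunits (-x) hnu
    simpa [sub_neg_eq_add] using this
  -- Part 1 : matrices `1 + M` with entries of `M` in `I` are invertible
  have h1 : ∀ M : Matrix (Fin 2) (Fin 2) S, (∀ i j, M i j ∈ I) → IsUnit (1 + M) := by
    intro M hM
    rw [Matrix.isUnit_iff_isUnit_det]
    have hdet : (1 + M).det - 1 ∈ I := by
      rw [hIdef, RingHom.mem_ker, map_sub, map_one, RingHom.map_det, RingHom.mapMatrix_apply]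
      have hmap : (1 + M).map f = 1 := by
        ext i j
        have hM0 : f (M i j) = 0 := hM i j
        simp [Matrix.map_apply, Matrix.add_apply, Matrix.one_apply, apply_ite f, hM0]
      rw [hmap, Matrix.det_one, sub_self]
    have := hunit_one_add _ hdet
    simpa [add_sub_cancel] using this
  refine ⟨h1, ?_⟩
  -- products with a matrix whose entries lie in `I` have entries in `I`
  have hmul_entry : ∀ A B : Matrix (Fin 2) (Fin 2) S, (∀ i j, B i j ∈ I) →
      ∀ i j, (A * B) i j ∈ I := by
    intro A B hB i j
    rw [Matrix.mul_apply]
    exact Ideal.sum_mem _ fun k _ => Ideal.mul_mem_left _ _ (hB k j)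
  -- the subgroup
  refine ⟨{ carrier := gammaSet S I
            one_mem' := by
              intro i j
              simp [gammaSet]
            mul_mem' := by
              intro u v hu hv i j
              have key : ((u * v : GL (Fin 2) S) : Matrix (Fin 2) (Fin 2) S) - 1
                  = ((u : Matrix (Fin 2) (Fin 2) S) - 1) * ((v : Matrix (Fin 2) (Fin 2) S) - 1)
                    + (((u : Matrix (Fin 2) (Fin 2) S) - 1)
                    + ((v : Matrix (Fin 2) (Fin 2) S) - 1)) := by
                rw [Units.val_mul]
                noncomm_ring
              rw [key, Matrix.add_apply, Matrix.add_apply]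
              exact I.add_mem (hmul_entry _ _ hv i j) (I.add_mem (hu i j) (hv i j))
            inv_mem' := by
              intro u hu i j
              have hinv : ∀ i j, (1 - (u : Matrix (Fin 2) (Fin 2) S)) i j ∈ I := by
                intro i j
                have : (1 - (u : Matrix (Fin 2) (Fin 2) S))
                    = -((u : Matrix (Fin 2) (Fin 2) S) - 1) := (neg_sub _ _).symm
                rw [this, Matrix.neg_apply]
                exact I.neg_mem (hu i j)
              have key : ((u⁻¹ : GL (Fin 2) S) : Matrix (Fin 2) (Fin 2) S) - 1
                  = ((u⁻¹ : GL (Fin 2) S) : Matrix (Fin 2) (Fin 2) S)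
                    * (1 - (u : Matrix (Fin 2) (Fin 2) S)) := by
                rw [mul_sub, mul_one, ← Units.val_mul, inv_mul_cancel, Units.val_one]
              rw [key]
              exact hmul_entry _ _ hinv i j }, rfl, ?_⟩
  -- cardinality computation
  haveI : Finite I := hfin
  haveI : Fintype I := Fintype.ofFinite I
  -- `f` reflects units
  have hreflect : ∀ x : S, IsUnit (f x) → IsUnit x := by
    intro x hx
    obtain ⟨y, hy⟩ := hf (↑hx.unit⁻¹)
    have hxy : x * y - 1 ∈ I := by
      rw [hIdef, RingHom.mem_ker, map_sub, map_mul, hy, map_one]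
      rw [IsUnit.mul_val_inv, sub_self]
    have h := hunit_one_add _ hxy
    rw [add_sub_cancel] at h
    exact isUnit_of_mul_isUnit_left h
  -- primes other than `p` are units in `S`
  have hqunit : ∀ q : ℕ, q.Prime → q ≠ p → IsUnit (q : S) := by
    intro q hq hqp
    apply hreflect
    rw [map_natCast]
    by_contra hqu
    rw [PadicInt.not_isUnit_iff] at hqu
    have : ((q : ℤ) : ℤ_[p]) = (q : ℤ_[p]) := by push_cast; ring
    rw [← this, PadicInt.norm_int_lt_one_iff_dvd, Int.natCast_dvd_natCast] at hqu
    rcases (Nat.Prime.eq_one_or_self_of_dvd hq p hqu) with h | h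
    · exact (Fact.out : p.Prime).one_lt.ne' h
    · exact hqp h.symm
  -- the cardinality of `I` is a power of `p`
  have hcardI : ∃ a : ℕ, Nat.card I = p ^ a := by
    have h0 : Nat.card I ≠ 0 := Nat.card_ne_zero.mpr ⟨⟨⟨0, I.zero_mem⟩⟩, inferInstance⟩
    exact ⟨_, Nat.eq_prime_pow_of_unique_prime_dvd h0 (by
      intro d hd hdvd
      by_contra hne
      haveI : Fact d.Prime := ⟨hd⟩
      rw [Nat.card_eq_fintype_card] at hdvd
      obtain ⟨x, hx⟩ := exists_prime_addOrderOf_dvd_card (G := I) d hdvd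
      have hdx : d • x = 0 := hx ▸ addOrderOf_nsmul_eq_zero x
      have hdxS : (d : S) * (x : S) = 0 := by
        have := congrArg (Subtype.val) hdx
        simpa [nsmul_eq_mul] using this
      have hx0 : (x : S) = 0 := by
        rwa [(hqunit d hd hne).mul_right_eq_zero] at hdxS
      have : x = 0 := Subtype.ext hx0
      rw [this, addOrderOf_zero] at hx
      exact hd.one_lt.ne' hx.symm)⟩
  obtain ⟨a, ha⟩ := hcardI
  -- the subgroup is in bijection with matrices with entries in `I`
  have key : ∀ u : GL (Fin 2) S, u ∈ gammaSet S I ↔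
      ∀ i j, ((u : Matrix (Fin 2) (Fin 2) S) - 1) i j ∈ I := fun _ => Iff.rfl
  refine ⟨a * 4, ?_⟩
  have e : {u : GL (Fin 2) S // u ∈ gammaSet S I} ≃ (Fin 2 → Fin 2 → I) :=
    { toFun := fun u => fun i j => ⟨((u.1 : Matrix (Fin 2) (Fin 2) S) - 1) i j, u.2 i j⟩
      invFun := fun A =>
        ⟨(h1 (Matrix.of fun i j => (A i j : S)) (fun i j => (A i j).2)).unit, by
          intro i j
          rw [IsUnit.unit_spec]
          simp⟩
      left_inv := by
        intro u
        apply Subtype.ext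
        apply Units.ext
        rw [IsUnit.unit_spec]
        ext i j
        simp
      right_inv := by
        intro A
        funext i j
        apply Subtype.ext
        simp [IsUnit.unit_spec] }
  have hcard : Nat.card {u : GL (Fin 2) S // u ∈ gammaSet S I} = Nat.card I ^ 4 := by
    rw [Nat.card_congr e, Nat.card_fun, Nat.card_fun, Nat.card_eq_fintype_card (α := Fin 2)]
    norm_num [← pow_mul]
  calc Nat.card {u : GL (Fin 2) S // u ∈ gammaSet S I} = Nat.card I ^ 4 := hcard
    _ = p ^ (a * 4) := by rw [ha, ← pow_mul]
end

section
/- Fix a prime p. Let R and S be commutative local rings equipped with surjective ring homomorphisms onto ℤ_p whose kernels I_R ⊆ R and I_S ⊆ S are finite as sets, and let π : S → R be a surjective ring homomorphism with kernel J, compatible with the maps to ℤ_p. Suppose J has exactly p elements and pJ = 0 (so J is a 1-dimensional 𝔽_p-vector space), and suppose there exists x ∈ J whose image in the cotangent space m_S/(m_S² + pS) is nonzero, where m_S is the maximal ideal of S (its image in m_R/(m_R² + pR) is zero since x ∈ J). Then there exists a subring S′ ⊆ S such that the restriction of π to S′ is a ring isomorphism S′ ≅ R. -/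
set_option maxHeartbeats 2000000

/-- let `π : S → R` be a compatible surjection of commutative local rings that
surject onto `ℤ_p` with finite kernels, whose kernel `J` has exactly `p` elements and satisfies
`pJ = 0`. If some `x ∈ J` has nonzero image in the cotangent space `m_S/(m_S² + pS)`, then
there is a subring `S′ ⊆ S` such that `π` restricts to a ring isomorphism `S′ ≅ R`. -/
theorem stmt15 (p : ℕ) [Fact p.Prime]
    (R S : Type*) [CommRing R] [IsLocalRing R] [CommRing S] [IsLocalRing S]
    (fR : R →+* ℤ_[p]) (hfR : Function.Surjective fR) (hIR : Finite (RingHom.ker fR))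
    (fS : S →+* ℤ_[p]) (hfS : Function.Surjective fS) (hIS : Finite (RingHom.ker fS))
    (π : S →+* R) (hπ : Function.Surjective π) (hcomp : fR.comp π = fS)
    (hcard : Nat.card (RingHom.ker π) = p)
    (hpJ : ∀ x ∈ RingHom.ker π, (p : S) * x = 0)
    (hx : ∃ x ∈ RingHom.ker π, x ∈ IsLocalRing.maximalIdeal S ∧
      x ∉ (IsLocalRing.maximalIdeal S) ^ 2 + Ideal.span {(p : S)}) :
    ∃ S' : Subring S, Function.Bijective (fun y : S' => π (y : S)) := by
  obtain ⟨x, hxJ, hxm, hxK⟩ := hx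
  have hp : p.Prime := Fact.out
  set M : Ideal S := IsLocalRing.maximalIdeal S with hMdef
  set K : Ideal S := M ^ 2 + Ideal.span {(p : S)} with hKdef
  -- the residue maps
  set φS : S →+* ZMod p := (PadicInt.toZMod).comp fS with hφS
  set φR : R →+* ZMod p := (PadicInt.toZMod).comp fR with hφR
  have hφcomp : ∀ s : S, φR (π s) = φS s := by
    intro s
    simp [hφS, hφR, ← hcomp, RingHom.comp_apply]
  -- maximal ideals are kernels of the residue maps
  have hSurjS : Function.Surjective φS := by
    intro c
    exact ⟨(c.val : S), by simp [hφS, map_natCast, ZMod.natCast_val, ZMod.cast_id]⟩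
  have hSurjR : Function.Surjective φR := by
    intro c
    exact ⟨(c.val : R), by simp [hφR, map_natCast, ZMod.natCast_val, ZMod.cast_id]⟩
  have hMS : RingHom.ker φS = M :=
    IsLocalRing.eq_maximalIdeal (RingHom.ker_isMaximal_of_surjective φS hSurjS)
  have hMR : RingHom.ker φR = IsLocalRing.maximalIdeal R :=
    IsLocalRing.eq_maximalIdeal (RingHom.ker_isMaximal_of_surjective φR hSurjR)
  have hmemM : ∀ s : S, s ∈ M ↔ φS s = 0 := by
    intro s; rw [← hMS]; exact Iff.rfl
  have hmemMR : ∀ r : R, r ∈ IsLocalRing.maximalIdeal R ↔ φR r = 0 := by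
    intro r; rw [← hMR]; exact Iff.rfl
  -- K ≤ M
  have hpM : (p : S) ∈ M := by rw [hmemM]; simp
  have hKM : K ≤ M := by
    rw [hKdef, Submodule.add_eq_sup]
    refine sup_le (Ideal.pow_le_self two_ne_zero) ?_
    rw [Ideal.span_le, Set.singleton_subset_iff]
    exact hpM
  have hsqK : M ^ 2 ≤ K := by
    rw [hKdef, Submodule.add_eq_sup]; exact le_sup_left
  have hpK : (p : S) ∈ K := by
    rw [hKdef, Submodule.add_eq_sup]
    exact Ideal.mem_sup_right (Ideal.subset_span rfl)
  -- J ⊆ M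
  have hJM : ∀ j ∈ RingHom.ker π, j ∈ M := by
    intro j hj
    rw [hmemM, ← hφcomp, RingHom.mem_ker.mp hj, map_zero]
  -- integers in M are divisible by p
  have hintM : ∀ n : ℤ, (n : S) ∈ M → (p : ℤ) ∣ n := by
    intro n hn
    rw [hmemM, map_intCast, ZMod.intCast_zmod_eq_zero_iff_dvd] at hn
    exact_mod_cast hn
  -- the quotient Q = S/K as a ZMod p module
  haveI : NeZero p := ⟨hp.ne_zero⟩
  have hQp : ∀ q : S ⧸ K, p • q = 0 := by
    intro q
    obtain ⟨s, rfl⟩ := Ideal.Quotient.mk_surjective q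
    rw [← map_nsmul, nsmul_eq_mul]
    exact (Ideal.Quotient.eq_zero_iff_mem).mpr (Ideal.mul_mem_right _ _ hpK)
  haveI : Module (ZMod p) (S ⧸ K) := AddCommMonoid.zmodModule hQp
  set mk : S →+* S ⧸ K := Ideal.Quotient.mk K with hmk
  have hmkK : ∀ s ∈ K, mk s = 0 := fun s hs => (Ideal.Quotient.eq_zero_iff_mem).mpr hs
  have hxQ : mk x ≠ 0 := fun h => hxK ((Ideal.Quotient.eq_zero_iff_mem).mp h)
  set L : Submodule (ZMod p) (S ⧸ K) := Submodule.span (ZMod p) {mk x} with hL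
  obtain ⟨W, hLW⟩ := L.exists_isCompl

  have hWz : ∀ (t : ℤ) {q : S ⧸ K}, q ∈ W → ((t • q : S ⧸ K) ∈ W) := by
    intro t q hq
    rw [← Int.cast_smul_eq_zsmul (ZMod p)]
    exact W.smul_mem _ hq
  -- every element of J is an integer multiple of x
  have hJx : ∀ j ∈ RingHom.ker π, ∃ t : ℤ, j = t • x := by
    intro j hj
    have hx0 : x ≠ 0 := fun h => hxK (h ▸ K.zero_mem)
    have hord : addOrderOf x = p := by
      have h1 : addOrderOf x ∣ p := addOrderOf_dvd_of_nsmul_eq_zero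
        (by rw [nsmul_eq_mul]; exact hpJ x hxJ)
      rcases (Nat.Prime.eq_one_or_self_of_dvd hp _ h1) with h | h
      · exact absurd (AddMonoid.addOrderOf_eq_one_iff.mp h) hx0
      · exact h
    have hfin : Finite (RingHom.ker π) := Nat.finite_of_card_ne_zero (by
      rw [hcard]; exact hp.ne_zero)
    have hsub : (AddSubgroup.zmultiples x : Set S) ⊆ (RingHom.ker π : Set S) := by
      intro y hy
      obtain ⟨t, rfl⟩ := AddSubgroup.mem_zmultiples_iff.mp hy
      rw [zsmul_eq_mul]
      exact Ideal.mul_mem_left _ _ hxJ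
    have hcards : ((RingHom.ker π : Set S)).ncard ≤ ((AddSubgroup.zmultiples x : Set S)).ncard := by
      have e1 : ((AddSubgroup.zmultiples x : Set S)).ncard = p := by
        rw [← Nat.card_coe_set_eq]
        have := Nat.card_zmultiples x
        rw [hord] at this
        exact this
      have e2 : ((RingHom.ker π : Set S)).ncard = p := by
        rw [← Nat.card_coe_set_eq]
        exact hcard
      rw [e1, e2]
    have hfin2 : ((RingHom.ker π : Set S)).Finite := by
      rw [← Set.finite_coe_iff]
      exact hfin
    have heq := Set.eq_of_subset_of_ncard_le hsub hcards hfin2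
    have : j ∈ (AddSubgroup.zmultiples x : Set S) := by rw [heq]; exact hj
    obtain ⟨t, ht⟩ := AddSubgroup.mem_zmultiples_iff.mp this
    exact ⟨t, ht.symm⟩
  -- the subring
  refine ⟨{
      carrier := {s : S | ∃ n : ℤ, s - (n : S) ∈ M ∧ mk (s - (n : S)) ∈ W}
      one_mem' := ⟨1, by simp, by simp⟩
      zero_mem' := ⟨0, by simp, by simp⟩
      mul_mem' := by
        rintro s t ⟨n, haM, haW⟩ ⟨k, hbM, hbW⟩
        have key : s * t - ((n * k : ℤ) : S)
            = (n : S) * (t - (k : S)) + (k : S) * (s - (n : S)) + (s - (n : S)) * (t - (k : S)) := by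
          push_cast; ring
        refine ⟨n * k, ?_, ?_⟩
        · rw [key]
          exact M.add_mem (M.add_mem (M.mul_mem_left _ hbM) (M.mul_mem_left _ haM))
            (M.mul_mem_left _ hbM)
        · have hz : mk (s - (n : S)) * mk (t - (k : S)) = 0 := by
            rw [← map_mul]
            exact hmkK _ (hsqK (by rw [pow_two]; exact Ideal.mul_mem_mul haM hbM))
          rw [key, map_add, map_add, map_mul, map_mul, map_mul, map_intCast, map_intCast, hz,
            ← zsmul_eq_mul, ← zsmul_eq_mul]
          exact W.add_mem (W.add_mem (hWz n hbW) (hWz k haW)) (by rw [hz] at *; exact W.zero_mem)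
      add_mem' := by
        rintro s t ⟨n, haM, haW⟩ ⟨k, hbM, hbW⟩
        have key : s + t - ((n + k : ℤ) : S) = (s - (n : S)) + (t - (k : S)) := by push_cast; ring
        refine ⟨n + k, ?_, ?_⟩
        · rw [key]; exact M.add_mem haM hbM
        · rw [key, map_add]; exact W.add_mem haW hbW
      neg_mem' := by
        rintro s ⟨n, haM, haW⟩
        have key : -s - ((-n : ℤ) : S) = -(s - (n : S)) := by push_cast; ring
        refine ⟨-n, ?_, ?_⟩
        · rw [key]; exact M.neg_mem haM
        · rw [key, map_neg]; exact W.neg_mem haW }, ?_, ?_⟩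
  -- injectivity
  · have hker0 : ∀ s : S,
        (∃ n : ℤ, s - (n : S) ∈ M ∧ mk (s - (n : S)) ∈ W) → π s = 0 → s = 0 := by
      intro s hs hs0
      obtain ⟨n, haM, haW⟩ := hs
      have hsJ : s ∈ RingHom.ker π := hs0
      have hsM : s ∈ M := hJM s hsJ
      have hnM : (n : S) ∈ M := by
        have h1 := M.sub_mem hsM haM
        simpa using h1
      obtain ⟨m, hm⟩ := hintM n hnM
      have hnK : (n : S) ∈ K := by
        rw [hm]; push_cast
        exact Ideal.mul_mem_right _ _ hpK
      have hmks : mk s ∈ W := by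
        have h2 : mk s = mk (s - (n : S)) + mk ((n : S)) := by
          rw [← map_add]; ring_nf
        rw [h2, hmkK _ hnK, add_zero]
        exact haW
      obtain ⟨t, rfl⟩ := hJx s hsJ
      have hmkL : mk (t • x) ∈ L := by
        rw [map_zsmul, ← Int.cast_smul_eq_zsmul (ZMod p)]
        exact L.smul_mem _ (Submodule.mem_span_singleton_self _)
      have h0 : mk (t • x) = 0 :=
        Submodule.disjoint_def.mp hLW.disjoint _ hmkL hmks
      have hcast : ((t : ℤ) : ZMod p) • mk x = 0 := by
        rw [Int.cast_smul_eq_zsmul]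
        rw [map_zsmul] at h0
        exact h0
      have htz : ((t : ℤ) : ZMod p) = 0 := by
        rcases smul_eq_zero.mp hcast with h | h
        · exact h
        · exact absurd h hxQ
      obtain ⟨u, hu⟩ := (ZMod.intCast_zmod_eq_zero_iff_dvd t p).mp htz
      rw [hu, mul_comm, mul_zsmul, natCast_zsmul, nsmul_eq_mul, hpJ x hxJ, smul_zero]
    rintro y₁ y₂ h
    simp only at h
    apply Subtype.ext
    have hd := (y₁ - y₂).2
    have h0 : π ((y₁ - y₂ : _) : S) = 0 := by
      rw [AddSubgroupClass.coe_sub, map_sub, h, sub_self]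
    have := hker0 _ hd h0
    rw [AddSubgroupClass.coe_sub] at this
    exact sub_eq_zero.mp this
  -- surjectivity
  · intro r
    obtain ⟨c, hc⟩ : ∃ c : ZMod p, φR r = c := ⟨φR r, rfl⟩
    obtain ⟨n, hcast⟩ : ∃ n : ℤ, ((n : ℤ) : ZMod p) = c :=
      ⟨(c.val : ℤ), by push_cast; simp [ZMod.natCast_val, ZMod.cast_id]⟩
    have hrn : r - ((n : ℤ) : R) ∈ IsLocalRing.maximalIdeal R := by
      rw [hmemMR, map_sub, map_intCast, hcast, hc, sub_self]
    obtain ⟨s₀, hs₀⟩ := hπ (r - ((n : ℤ) : R))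
    have hs₀M : s₀ ∈ M := by
      rw [hmemM, ← hφcomp, hs₀]
      exact (hmemMR _).mp hrn
    have hmem : mk s₀ ∈ L ⊔ W := by rw [hLW.sup_eq_top]; trivial
    obtain ⟨l, hl, w, hw, hlw⟩ := Submodule.mem_sup.mp hmem
    obtain ⟨c', hc'⟩ := Submodule.mem_span_singleton.mp hl
    obtain ⟨t, htc⟩ : ∃ t : ℤ, ((t : ℤ) : ZMod p) = c' :=
      ⟨(c'.val : ℤ), by push_cast; simp [ZMod.natCast_val, ZMod.cast_id]⟩
    have htx : t • x ∈ M := by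
      rw [zsmul_eq_mul]; exact M.mul_mem_left _ hxm
    have hmkw : mk (s₀ - t • x) ∈ W := by
      rw [map_sub, map_zsmul, ← Int.cast_smul_eq_zsmul (ZMod p), htc, hc', ← hlw]
      simpa using hw
    refine ⟨⟨((n : ℤ) : S) + (s₀ - t • x), n, ?_, ?_⟩, ?_⟩
    · have key : ((n : ℤ) : S) + (s₀ - t • x) - ((n : ℤ) : S) = s₀ - t • x := by ring
      rw [key]; exact M.sub_mem hs₀M htx
    · have key : ((n : ℤ) : S) + (s₀ - t • x) - ((n : ℤ) : S) = s₀ - t • x := by ring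
      rw [key]; exact hmkw
    · show π (((n : ℤ) : S) + (s₀ - t • x)) = r
      have hπx : π x = 0 := hxJ
      rw [map_add, map_sub, map_intCast, hs₀, map_zsmul, hπx, smul_zero, sub_zero]
      ring
end

section
/- Fix a prime p. Let R and S be commutative local rings equipped with surjective ring homomorphisms onto ℤ_p whose kernels I_R ⊆ R and I_S ⊆ S are finite as sets, and let π : S → R be a surjective ring homomorphism with nonzero kernel J, compatible with the maps to ℤ_p. Let Φ̃ be a finite subgroup of GL₂(ℤ_p) of order prime to p, and let Γ̃ ⊆ GL₂(R) be the preimage of Φ̃ under the map GL₂(R) → GL₂(ℤ_p). If the subgroup Γ_J = 1 + M₂(J) of GL₂(S) is contained in the subgroup generated by commutators and p-th powers of elements of Γ_S = 1 + M₂(I_S), then there is no group homomorphism ψ : Γ̃ → GL₂(S) whose composition with the map GL₂(S) → GL₂(R) induced by π equals the inclusion Γ̃ ⊆ GL₂(R). -/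
open scoped MatrixGroups

lemma glMap_coe {R S : Type*} [CommRing R] [CommRing S] (f : R →+* S) (u : GL (Fin 2) R) :
    (glMap f u : Matrix (Fin 2) (Fin 2) S) = (u : Matrix (Fin 2) (Fin 2) R).map f := rfl

lemma glMap_comp_apply {R S T : Type*} [CommRing R] [CommRing S] [CommRing T]
    (f : R →+* S) (g : S →+* T) (u : GL (Fin 2) R) :
    glMap g (glMap f u) = glMap (g.comp f) u := by
  apply Units.ext
  simp [glMap_coe, Matrix.map_map]

lemma isUnit_of_isUnit_map {S T : Type*} [CommRing S] [IsLocalRing S] [CommRing T] [Nontrivial T]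
    (f : S →+* T) (hf : Function.Surjective f) {x : S} (h : IsUnit (f x)) : IsUnit x := by
  obtain ⟨u, hu⟩ := h
  obtain ⟨y, hy⟩ := hf ((u⁻¹ : Tˣ) : T)
  have h1 : f (x * y) = 1 := by rw [map_mul, ← hu, hy, Units.mul_inv]
  have h2 : IsUnit (x * y) := by
    have h3 : IsUnit ((1 : S) + (x * y - 1)) ∨ IsUnit (-(x * y - 1)) := by
      apply IsLocalRing.isUnit_or_isUnit_of_isUnit_add
      simp
    rcases h3 with h3 | h3
    · simpa using h3
    · exfalso
      have := h3.map f
      rw [map_neg, map_sub, h1, map_one, sub_self, neg_zero] at this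
      exact not_isUnit_zero this
  exact isUnit_of_mul_isUnit_left h2

lemma mem_glMap_ker_iff {S T : Type*} [CommRing S] [CommRing T] (f : S →+* T)
    (u : GL (Fin 2) S) :
    u ∈ (glMap f).ker ↔ ∀ i j, ((u : Matrix (Fin 2) (Fin 2) S) - 1) i j ∈ RingHom.ker f := by
  rw [MonoidHom.mem_ker]
  constructor
  · intro h i j
    have h1 : (glMap f u : Matrix (Fin 2) (Fin 2) T) = 1 := by rw [h]; rfl
    rw [glMap_coe] at h1
    have h2 : f (((u : Matrix (Fin 2) (Fin 2) S) - 1) i j)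
        = ((u : Matrix (Fin 2) (Fin 2) S).map f - 1) i j := by
      simp [Matrix.map_apply, Matrix.sub_apply, Matrix.one_apply, apply_ite f]
    rw [RingHom.mem_ker, h2, h1, sub_self, Matrix.zero_apply]
  · intro h
    apply Units.ext
    show (glMap f u : Matrix (Fin 2) (Fin 2) T) = 1
    rw [glMap_coe]
    ext i j
    have := h i j
    rw [RingHom.mem_ker] at this
    have h2 : f (((u : Matrix (Fin 2) (Fin 2) S) - 1) i j)
        = ((u : Matrix (Fin 2) (Fin 2) S).map f - 1) i j := by
      simp [Matrix.map_apply, Matrix.sub_apply, Matrix.one_apply, apply_ite f]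
    rw [h2] at this
    have := sub_eq_zero.mp this
    simpa using this

lemma gammaSet_eq_ker {S T : Type*} [CommRing S] [CommRing T] (f : S →+* T) :
    gammaSet S (RingHom.ker f) = ((glMap f).ker : Set (GL (Fin 2) S)) :=
  Set.ext fun u => (mem_glMap_ker_iff f u).symm

lemma finite_glMap_ker {S T : Type*} [CommRing S] [CommRing T] (f : S →+* T)
    (h : Finite (RingHom.ker f)) : Finite ((glMap f).ker) := by
  let F : (glMap f).ker → Matrix (Fin 2) (Fin 2) (RingHom.ker f) := fun u => fun i j =>
    ⟨((u : GL (Fin 2) S) : Matrix (Fin 2) (Fin 2) S) i j - (1 : Matrix (Fin 2) (Fin 2) S) i j,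
      by simpa using (mem_glMap_ker_iff f u).mp u.2 i j⟩
  have hF : Function.Injective F := by
    intro u v huv
    ext : 2
    ext i j
    have := congrFun (congrFun huv i) j
    have := congrArg Subtype.val this
    simpa [F, sub_left_injective.eq_iff] using this
  exact Finite.of_injective F hF

lemma isPGroup_of_forall_prime {G : Type*} [Group G] [Finite G] {p : ℕ}
    (h : ∀ q : ℕ, q.Prime → q ∣ Nat.card G → q = p) : IsPGroup p G := by
  have hG : Nat.card G ≠ 0 := Nat.card_pos.ne'
  apply IsPGroup.of_card (n := (Nat.card G).primeFactorsList.length)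
  conv_lhs => rw [← Nat.prod_primeFactorsList hG]
  rw [List.eq_replicate_of_mem (l := (Nat.card G).primeFactorsList) (a := p)
    (fun q hq => h q ((Nat.mem_primeFactorsList hG).mp hq).1
      ((Nat.mem_primeFactorsList hG).mp hq).2),
    List.prod_replicate]
  simp

lemma isPGroup_glMap_ker (p : ℕ) [Fact p.Prime] {S : Type*} [CommRing S] [IsLocalRing S]
    (fS : S →+* ℤ_[p]) (hfS : Function.Surjective fS)
    [hfin : Finite ((glMap fS).ker)] :
    IsPGroup p (glMap fS).ker := by
  apply isPGroup_of_forall_prime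
  intro q hq hdvd
  by_contra hqp
  haveI : Fact q.Prime := ⟨hq⟩
  obtain ⟨g, hg⟩ := exists_prime_orderOf_dvd_card' q hdvd
  set u : GL (Fin 2) S := (g : GL (Fin 2) S) with hu
  have hu1 : (u : Matrix (Fin 2) (Fin 2) S) ^ q = 1 := by
    have h1 : g ^ q = 1 := by rw [← hg]; exact pow_orderOf_eq_one g
    have h2 : u ^ q = 1 := by
      rw [hu, ← Subgroup.coe_pow, h1]; rfl
    calc (u : Matrix (Fin 2) (Fin 2) S) ^ q
        = ((u ^ q : GL (Fin 2) S) : Matrix (Fin 2) (Fin 2) S) := by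
          rw [Units.val_pow_eq_pow_val]
      _ = 1 := by rw [h2]; rfl
  set m : Matrix (Fin 2) (Fin 2) S := (u : Matrix (Fin 2) (Fin 2) S) - 1 with hmdef
  have hm : ∀ i j, fS (m i j) = 0 := fun i j =>
    RingHom.mem_ker.mp ((mem_glMap_ker_iff fS u).mp g.2 i j)
  set B : Matrix (Fin 2) (Fin 2) S :=
    ∑ i ∈ Finset.range q, m ^ i * ((q.choose (i + 1) : ℕ) : Matrix (Fin 2) (Fin 2) S) with hBdef
  have key : m * B = 0 := by
    have expand := Commute.add_pow (Commute.one_right m) q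
    have calc1 : m * B = ∑ i ∈ Finset.range q,
        m ^ (i + 1) * ((q.choose (i + 1) : ℕ) : Matrix (Fin 2) (Fin 2) S) := by
      rw [hBdef, Finset.mul_sum]
      refine Finset.sum_congr rfl fun i _ => ?_
      rw [← mul_assoc, ← pow_succ']
    have calc2 : (m + 1) ^ q - 1 = ∑ i ∈ Finset.range q,
        m ^ (i + 1) * ((q.choose (i + 1) : ℕ) : Matrix (Fin 2) (Fin 2) S) := by
      rw [expand]
      rw [Finset.sum_range_succ']
      simp
    have calc3 : (m + 1) ^ q = 1 := by
      rw [hmdef, sub_add_cancel, hu1]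
    rw [calc1, ← calc2, calc3, sub_self]
  have hBmap : B.map fS = ((q : ℕ) : Matrix (Fin 2) (Fin 2) ℤ_[p]) := by
    have hmmap : fS.mapMatrix m = 0 := by
      ext i j
      simpa using hm i j
    have : fS.mapMatrix B = ((q : ℕ) : Matrix (Fin 2) (Fin 2) ℤ_[p]) := by
      rw [hBdef, map_sum]
      rw [Finset.sum_eq_single 0]
      · simp
      · intro i _ hi
        rw [map_mul, map_pow, hmmap, zero_pow hi, zero_mul]
      · intro habs
        exact absurd (Finset.mem_range.mpr hq.pos) habs
    exact this
  have hqunit : IsUnit ((q : ℕ) : ℤ_[p]) := by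
    rw [PadicInt.isUnit_iff]
    refine le_antisymm (PadicInt.norm_le_one _) ?_
    by_contra hlt
    push_neg at hlt
    have : ((p : ℕ) : ℤ) ∣ ((q : ℕ) : ℤ) := by
      have := (PadicInt.norm_int_lt_one_iff_dvd (q : ℤ)).mp (by push_cast at hlt ⊢; exact hlt)
      exact this
    have hpq : (p : ℕ) ∣ q := by exact_mod_cast this
    exact hqp ((Nat.prime_dvd_prime_iff_eq (Fact.out) hq).mp hpq).symm
  have hBunit : IsUnit B := by
    rw [Matrix.isUnit_iff_isUnit_det]
    apply isUnit_of_isUnit_map fS hfS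
    rw [RingHom.map_det, RingHom.mapMatrix_apply, hBmap]
    rw [← Matrix.diagonal_natCast]
    simp [Matrix.det_fin_two, Matrix.diagonal_apply]
    exact hqunit
  have hm0 : m = 0 := by
    obtain ⟨v, hv⟩ := hBunit
    have : m * B * (↑v⁻¹ : Matrix (Fin 2) (Fin 2) S) = 0 := by rw [key, zero_mul]
    rwa [← hv, mul_assoc, Units.mul_inv, mul_one] at this
  have hune : u = 1 := by
    apply Units.ext
    rw [Units.val_one]
    have h0 : (u : Matrix (Fin 2) (Fin 2) S) - 1 = 0 := hm0
    exact sub_eq_zero.mp h0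
  have : g = 1 := by
    apply Subtype.ext
    exact hune
  rw [this, orderOf_one] at hg
  exact hq.one_lt.ne hg

lemma coatom_key {G : Type*} [Group G] [Finite G] {p : ℕ} [Fact p.Prime]
    (hG : IsPGroup p G) {M : Subgroup G} (hM : IsCoatom M) :
    (∀ a b : G, a * b * a⁻¹ * b⁻¹ ∈ M) ∧ (∀ a : G, a ^ p ∈ M) := by
  haveI hnil : Group.IsNilpotent G := hG.isNilpotent
  haveI hnorm : M.Normal :=
    Subgroup.NormalizerCondition.normal_of_coatom M
      (normalizerCondition_of_isNilpotent (G := G)) hM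
  set mk := QuotientGroup.mk' M with hmk
  have hQp : IsPGroup p (G ⧸ M) := hG.to_quotient M
  have hdich : ∀ K : Subgroup (G ⧸ M), K = ⊥ ∨ K = ⊤ := by
    intro K
    have h1 : M ≤ K.comap mk := fun x hx => by
      have : mk x = 1 := by
        rw [hmk, QuotientGroup.mk'_apply, QuotientGroup.eq_one_iff]; exact hx
      rw [Subgroup.mem_comap, this]; exact one_mem K
    have hself : (K.comap mk).map mk = K :=
      Subgroup.map_comap_eq_self_of_surjective (QuotientGroup.mk'_surjective M) K
    rcases eq_or_lt_of_le h1 with heq | hlt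
    · left
      rw [← hself, ← heq, Subgroup.map_eq_bot_iff, hmk, QuotientGroup.ker_mk']
    · right
      rw [← hself, hM.2 _ hlt, Subgroup.map_top_of_surjective _ (QuotientGroup.mk'_surjective M)]
  have hexp : ∀ x : G ⧸ M, x ^ p = 1 := by
    intro x
    by_contra hxne
    have hxp : Subgroup.zpowers (x ^ p) = ⊤ :=
      (hdich _).resolve_left (by simpa [Subgroup.zpowers_eq_bot] using hxne)
    have hx1 : x ≠ 1 := fun h => hxne (by rw [h, one_pow])
    have hmem : x ∈ Subgroup.zpowers (x ^ p) := hxp ▸ Subgroup.mem_top x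
    have hdvd : orderOf x ∣ orderOf (x ^ p) := orderOf_dvd_of_mem_zpowers hmem
    obtain ⟨k, hk⟩ := (IsPGroup.iff_orderOf.mp hQp) x
    have hkpos : k ≠ 0 := by
      rintro rfl
      rw [pow_zero] at hk
      exact hx1 (orderOf_eq_one_iff.mp hk)
    have hpdvd : p ∣ orderOf x := by
      rw [hk]
      exact dvd_pow_self p hkpos
    have horder : orderOf (x ^ p) = orderOf x / p := by
      rw [orderOf_pow_of_dvd (Fact.out (p := p.Prime)).pos.ne' hpdvd]
    have hlt : orderOf (x ^ p) < orderOf x := by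
      rw [horder]
      apply Nat.div_lt_self (orderOf_pos x) (Fact.out (p := p.Prime)).one_lt
    exact absurd (Nat.le_of_dvd (orderOf_pos _) hdvd) (not_le.mpr hlt)
  have hcomm : ∀ x y : G ⧸ M, x * y = y * x := by
    rcases subsingleton_or_nontrivial (G ⧸ M) with h | h
    · intro x y; exact Subsingleton.elim _ _
    · obtain ⟨x, hx⟩ := exists_ne (1 : G ⧸ M)
      have hxtop : Subgroup.zpowers x = ⊤ :=
        (hdich _).resolve_left (by simpa [Subgroup.zpowers_eq_bot] using hx)
      intro a b
      obtain ⟨n, hn⟩ := (hxtop ▸ Subgroup.mem_top a : a ∈ Subgroup.zpowers x)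
      obtain ⟨k, hk⟩ := (hxtop ▸ Subgroup.mem_top b : b ∈ Subgroup.zpowers x)
      rw [← hn, ← hk, ← zpow_add, ← zpow_add, add_comm]
  constructor
  · intro a b
    rw [← QuotientGroup.eq_one_iff]
    have : ((a * b * a⁻¹ * b⁻¹ : G) : G ⧸ M)
        = (a : G ⧸ M) * b * (a : G ⧸ M)⁻¹ * (b : G ⧸ M)⁻¹ := by
      rfl
    rw [this, hcomm (a : G ⧸ M) (b : G ⧸ M)]
    group
  · intro a
    rw [← QuotientGroup.eq_one_iff]
    have : ((a ^ p : G) : G ⧸ M) = (a : G ⧸ M) ^ p := by rfl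
    rw [this, hexp]



lemma frattini_lift {G : Type*} [Group G] [Finite G] (τ : G →* G)
    (hdec : ∀ g, g * (τ g)⁻¹ ∈ frattini G) : Function.Surjective τ := by
  haveI : Finite (Subgroup G) :=
    Finite.of_injective (fun H : Subgroup G => (H : Set G)) SetLike.coe_injective
  have hsup : τ.range ⊔ frattini G = ⊤ := by
    rw [eq_top_iff]
    rintro g -
    have hdecomp : g = (g * (τ g)⁻¹) * τ g := by group
    rw [hdecomp]
    exact Subgroup.mul_mem _ (Subgroup.mem_sup_right (hdec g))
      (Subgroup.mem_sup_left ⟨g, rfl⟩)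
  have htop : τ.range = ⊤ := frattini_nongenerating hsup
  intro x
  have : x ∈ τ.range := htop ▸ Subgroup.mem_top x
  exact this

lemma mem_frattini_of_forall_coatom {G : Type*} [Group G] {x : G}
    (h : ∀ M : Subgroup G, IsCoatom M → x ∈ M) : x ∈ frattini G := by
  rw [frattini, Order.radical]
  rw [Subgroup.mem_iInf]
  intro M
  rw [Subgroup.mem_iInf]
  intro hM
  exact h M hM


lemma closure_le_frattini_map {Γ : Type*} [Group Γ] {p : ℕ} [Fact p.Prime]
    (K : Subgroup Γ) [Finite K] (hpG : IsPGroup p K) :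
    Subgroup.closure ({x | ∃ a ∈ (K : Set Γ), ∃ b ∈ (K : Set Γ), x = a * b * a⁻¹ * b⁻¹} ∪
        {x | ∃ a ∈ (K : Set Γ), x = a ^ p})
      ≤ (frattini ↥K).map K.subtype := by
  rw [Subgroup.closure_le]
  rintro x (⟨a, ha, b, hb, rfl⟩ | ⟨a, ha, rfl⟩)
  · exact Subgroup.mem_map.mpr ⟨(⟨a, ha⟩ : K) * ⟨b, hb⟩ * (⟨a, ha⟩ : K)⁻¹ * (⟨b, hb⟩ : K)⁻¹,
      mem_frattini_of_forall_coatom fun M hM => (coatom_key hpG hM).1 _ _, rfl⟩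
  · exact Subgroup.mem_map.mpr ⟨(⟨a, ha⟩ : K) ^ p,
      mem_frattini_of_forall_coatom fun M hM => (coatom_key hpG hM).2 _, rfl⟩

lemma mem_frattini_of_map {Γ : Type*} [Group Γ] {K : Subgroup Γ} {y : K}
    (h : (y : Γ) ∈ (frattini ↥K).map K.subtype) : y ∈ frattini ↥K := by
  obtain ⟨y', hy', hyeq⟩ := Subgroup.mem_map.mp h
  rwa [show y' = y from Subtype.ext hyeq] at hy'

/-- with `π : S → R` a compatible surjection of local rings over `ℤ_p` with
finite kernels and nonzero kernel `J`, let `Φ̃ ⊆ GL₂(ℤ_p)` be a finite subgroup of order prime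
to `p` and `Γ̃ ⊆ GL₂(R)` its preimage.  If `Γ_J ⊆ [Γ_S, Γ_S]Γ_S^p`, then there is no lift of
the inclusion `Γ̃ ⊆ GL₂(R)` to a homomorphism `Γ̃ → GL₂(S)`. -/
theorem stmt17 (p : ℕ) [Fact p.Prime]
    (R S : Type*) [CommRing R] [IsLocalRing R] [CommRing S] [IsLocalRing S]
    (fR : R →+* ℤ_[p]) (hfR : Function.Surjective fR) (hIR : Finite (RingHom.ker fR))
    (fS : S →+* ℤ_[p]) (hfS : Function.Surjective fS) (hIS : Finite (RingHom.ker fS))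
    (π : S →+* R) (hπ : Function.Surjective π) (hcomp : fR.comp π = fS)
    (hJ : RingHom.ker π ≠ ⊥)
    (Φt : Subgroup (GL (Fin 2) ℤ_[p])) (hΦfin : Finite Φt) (hΦ : ¬ p ∣ Nat.card Φt)
    (hcl : gammaSet S (RingHom.ker π) ⊆
      (Subgroup.closure
        ({x | ∃ a ∈ gammaSet S (RingHom.ker fS), ∃ b ∈ gammaSet S (RingHom.ker fS),
            x = a * b * a⁻¹ * b⁻¹} ∪
          {x | ∃ a ∈ gammaSet S (RingHom.ker fS), x = a ^ p}) : Subgroup (GL (Fin 2) S))) :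
    ¬ ∃ ψ : (Φt.comap (glMap fR)) →* GL (Fin 2) S,
        ∀ γ : (Φt.comap (glMap fR)), glMap π (ψ γ) = (γ : GL (Fin 2) R) := by
  rintro ⟨ψ, hψ⟩
  haveI hKfin : Finite ((glMap fS).ker) := finite_glMap_ker fS hIS
  have hpG : IsPGroup p (glMap fS).ker := isPGroup_glMap_ker p fS hfS
  have hgl : ∀ u : GL (Fin 2) S, glMap fR (glMap π u) = glMap fS u := fun u => by
    rw [glMap_comp_apply, hcomp]
  have hmemΓ : ∀ g : ((glMap fS).ker),
      glMap π (g : GL (Fin 2) S) ∈ Φt.comap (glMap fR) := fun g => by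
    rw [Subgroup.mem_comap, hgl]
    have h2 := g.2
    rw [MonoidHom.mem_ker] at h2
    rw [h2]
    exact one_mem _
  let χ : ((glMap fS).ker) →* (Φt.comap (glMap fR)) :=
    MonoidHom.codRestrict ((glMap π).comp ((glMap fS).ker.subtype)) _ hmemΓ
  let τ : ((glMap fS).ker) →* GL (Fin 2) S := ψ.comp χ
  have hτval : ∀ g : ((glMap fS).ker), glMap π (τ g) = glMap π (g : GL (Fin 2) S) :=
    fun g => hψ (χ g)
  have hτmem : ∀ g : ((glMap fS).ker), τ g ∈ (glMap fS).ker := fun g => by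
    rw [MonoidHom.mem_ker, ← hgl, hτval g, hgl]
    have h2 := g.2
    rwa [MonoidHom.mem_ker] at h2
  let τ' : ((glMap fS).ker) →* ((glMap fS).ker) := MonoidHom.codRestrict τ _ hτmem
  rw [gammaSet_eq_ker fS] at hcl
  have hNF := closure_le_frattini_map (p := p) ((glMap fS).ker) hpG
  have hdec : ∀ g : ((glMap fS).ker), g * (τ' g)⁻¹ ∈ frattini ((glMap fS).ker) := by
    intro g
    apply mem_frattini_of_map
    apply hNF
    apply hcl
    rw [gammaSet_eq_ker π]
    have hco : ((g * (τ' g)⁻¹ : ((glMap fS).ker)) : GL (Fin 2) S)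
        = (g : GL (Fin 2) S) * (τ g)⁻¹ := rfl
    show _ ∈ ((glMap π).ker : Set (GL (Fin 2) S))
    rw [SetLike.mem_coe, MonoidHom.mem_ker, hco, map_mul, map_inv, hτval g, mul_inv_cancel]
  have hsurj : Function.Surjective τ' := frattini_lift τ' hdec
  -- a nontrivial element of Γ_J
  obtain ⟨j, hjmem, hjne⟩ := Submodule.exists_mem_ne_zero_of_ne_bot hJ
  let A : Matrix (Fin 2) (Fin 2) S := !![1, j; 0, 1]
  let A' : Matrix (Fin 2) (Fin 2) S := !![1, -j; 0, 1]
  have hAA : A * A' = 1 := by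
    simp [A, A', Matrix.mul_fin_two, Matrix.one_fin_two]
  have hAA' : A' * A = 1 := by
    simp [A, A', Matrix.mul_fin_two, Matrix.one_fin_two]
  let u0 : GL (Fin 2) S := ⟨A, A', hAA, hAA'⟩
  have hu0mem : u0 ∈ gammaSet S (RingHom.ker π) := by
    intro i j'
    fin_cases i <;> fin_cases j' <;>
      simp [u0, A, Matrix.one_apply] <;>
      first
        | exact Ideal.zero_mem _
        | exact hjmem
  have hu0ne : u0 ≠ 1 := by
    intro h
    have := congrArg (fun v : GL (Fin 2) S => (v : Matrix (Fin 2) (Fin 2) S) 0 1) h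
    simp [u0, A, Matrix.one_apply] at this
    exact hjne this
  have hkerle : RingHom.ker π ≤ RingHom.ker fS := fun x hx => by
    rw [RingHom.mem_ker] at hx ⊢
    rw [← hcomp, RingHom.comp_apply, hx, map_zero]
  have hu0K : u0 ∈ (glMap fS).ker := by
    rw [mem_glMap_ker_iff]
    intro i j'
    exact hkerle (hu0mem i j')
  obtain ⟨g, hg⟩ := hsurj ⟨u0, hu0K⟩
  have hπu0 : glMap π u0 = 1 := by
    have h1 : u0 ∈ (glMap π).ker := by
      rw [mem_glMap_ker_iff]
      exact hu0mem
    rwa [MonoidHom.mem_ker] at h1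
  have hτg : τ g = u0 := congrArg Subtype.val hg
  have hπg : glMap π (g : GL (Fin 2) S) = 1 := by
    rw [← hτval g, hτg, hπu0]
  have hχ1 : χ g = 1 := by
    apply Subtype.ext
    exact hπg
  have hτg1 : τ g = 1 := by
    show ψ (χ g) = 1
    rw [hχ1, map_one]
  exact hu0ne (hτg.symm.trans hτg1)
end
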